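/- For every R ∈ ℝ, every set B ⊆ ℝ_{>0} × [0,∞), and every g₀ ∈ SL(2,ℝ) with x₀ = Γ·g₀, the cardinality of {j : (e^{−R}·ξ_j(x₀,R), t_j(x₀,R)) ∈ B} equals the cardinality of P_Γ·g₀·a(−R) ∩ {e^{−t/2}·(r,1) : (r,t) ∈ B}, where t_j(x₀,R) denotes the second coordinate of the impact parameter w_j(x₀,R). -/

import Mathlib

noncomputable section
open MeasureTheory Filter Topology Matrix
open scoped UpperHalfPlane ENNReal NNReal

namespace CuspEVT

/-- `G = SL(2,ℝ)`. -/
abbrev G := Matrix.SpecialLinearGroup (Fin 2) ℝ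

instance : TopologicalSpace G := instTopologicalSpaceSubtype
instance : MeasurableSpace G := borel G
instance : BorelSpace G := ⟨rfl⟩
instance : Fact (Even (Fintype.card (Fin 2))) := ⟨⟨1, rfl⟩⟩
instance : MeasurableSpace ℍ := borel ℍ

/-- `n(s)`. -/
def nM (s : ℝ) : G := ⟨!![1, s; 0, 1], by simp [Matrix.det_fin_two_of]⟩
/-- `a(t)`. -/
def aM (t : ℝ) : G := ⟨!![Real.exp (t/2), 0; 0, Real.exp (-(t/2))], by
  simp [Matrix.det_fin_two_of, ← Real.exp_add]⟩
/-- `u(r)`. -/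
def uM (r : ℝ) : G := ⟨!![1, 0; r, 1], by simp [Matrix.det_fin_two_of]⟩

variable (Γ : Subgroup G)

/-- The quotient `X = Γ\G`. -/
abbrev X := Quotient (QuotientGroup.rightRel Γ)
/-- Canonical projection `G → Γ\G`. -/
def Xmk : G → X Γ := Quotient.mk''

/-- Right translation `Γg ↦ Γ(g·h)` on `Γ\G`. -/
def rmul (h : G) (x : X Γ) : X Γ :=
  Quotient.map' (· * h) (fun p q hpq => by
    rw [QuotientGroup.rightRel_apply] at hpq ⊢
    simpa [mul_assoc] using hpq) x

/-- geodesic flow `φ_t`. -/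
def geo (t : ℝ) (x : X Γ) : X Γ := rmul Γ (aM t) x
/-- unstable horocycle flow `h_s^+`. -/
def hP (s : ℝ) (x : X Γ) : X Γ := rmul Γ (uM (-s)) x
/-- stable horocycle flow `h_s^-`. -/
def hm (s : ℝ) (x : X Γ) : X Γ := rmul Γ (nM s) x

/-- The parameter domain `Σ = [0,1) × [0,∞)`. -/
def Sig : Set (ℝ × ℝ) := Set.Ico (0:ℝ) 1 ×ˢ Set.Ici (0:ℝ)

/-- The parametrisation `ι_R` of the Poincaré section. -/
def ι (R : ℝ) (w : ℝ × ℝ) : X Γ := Xmk Γ (nM w.1 * aM (w.2 + R))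

/-- The Poincaré section `H(R)`. -/
def Hsec (R : ℝ) : Set (X Γ) := ι Γ R '' Sig

/-- The measure `ν = e^{-t} ds dt` on `Σ`. -/
def ν : Measure (ℝ × ℝ) :=
  ((volume : Measure (ℝ × ℝ)).withDensity fun w => ENNReal.ofReal (Real.exp (-w.2))).restrict Sig

/-- First return time `η₁`. -/
def η₁ (w : ℝ × ℝ) : ℝ := sInf {r : ℝ | 0 < r ∧ hP Γ r (ι Γ 0 w) ∈ Hsec Γ 0}
/-- First backward return time `η₋₁`. -/
def ηneg (w : ℝ × ℝ) : ℝ := sInf {r : ℝ | 0 < r ∧ hP Γ (-r) (ι Γ 0 w) ∈ Hsec Γ 0}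
/-- Mean return time `η̄₁ = ∫_Σ η₁ dν`. -/
def ηbar : ℝ := ∫ w, η₁ Γ w ∂ν
/-- `Ψ(r,w) = η̄₁⁻¹ 𝟙(r < η₋₁(w))`. -/
def Ψ₂ (r : ℝ) (w : ℝ × ℝ) : ℝ := (ηbar Γ)⁻¹ * (if r < ηneg Γ w then 1 else 0)
/-- `Ψ(r) = ∫_Σ Ψ(r,w) dν(w)`. -/
def Ψ (r : ℝ) : ℝ := ∫ w, Ψ₂ Γ r w ∂ν

/-- The hypothesis that `-I ∈ Γ` and the upper triangular elements of `Γ`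
are exactly `±n(m)`, `m ∈ ℤ` (cusp at `∞` of width one). -/
def CuspAtInfinity : Prop :=
  (-1 : G) ∈ Γ ∧
    {γ : G | γ ∈ Γ ∧ (γ : Matrix (Fin 2) (Fin 2) ℝ) 1 0 = 0}
      = {γ : G | ∃ m : ℤ, γ = nM m ∨ γ = -nM m}

/-- Hitting-time data: `ξ x R` enumerates, in increasing order, the set
`{r > 0 : h_r^+(x) ∈ H(R)}`, and `w x R j ∈ Σ` is the impact parameter of the `j+1`-st hit. -/
structure HittingData where
  ξ : X Γ → ℝ → ℕ → ℝ
  w : X Γ → ℝ → ℕ → ℝ × ℝ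
  ξ_pos : ∀ x R j, 0 < ξ x R j
  ξ_mono : ∀ x R, StrictMono (ξ x R)
  ξ_mem : ∀ x R j, hP Γ (ξ x R j) x ∈ Hsec Γ R
  ξ_complete : ∀ x R r, 0 < r → hP Γ r x ∈ Hsec Γ R → ∃ j, ξ x R j = r
  w_mem : ∀ x R j, w x R j ∈ Sig
  w_spec : ∀ x R j, ι Γ R (w x R j) = hP Γ (ξ x R j) x

/-- `λ` is admissible: `λ(φ_t E) → μ(E)` for every Borel `E` with `μ`-null boundary. -/
def Admissible (μ lam : Measure (X Γ)) : Prop :=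
  ∀ E : Set (X Γ), MeasurableSet E → μ (frontier E) = 0 →
    Tendsto (fun t => lam (geo Γ t '' E)) atTop (𝓝 (μ E))

/-- The quotient `Y = Γ\ℍ`. -/
abbrev Y := Quotient (MulAction.orbitRel ↥Γ ℍ)
/-- Canonical projection `ℍ → Γ\ℍ`. -/
def Ymk : ℍ → Y Γ := Quotient.mk''

/-- The projection `π : Γ\G → Γ\ℍ`, `Γg ↦ Γ(g·i)`. -/
def πY : X Γ → Y Γ :=
  Quotient.map' (fun g => g • UpperHalfPlane.I)
    (fun p q h => by
      rw [QuotientGroup.rightRel_apply] at h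
      refine ⟨⟨p * q⁻¹, ?_⟩, ?_⟩
      · simpa [_root_.mul_inv_rev] using Γ.inv_mem h
      · show (p * q⁻¹ : G) • (q • UpperHalfPlane.I) = p • UpperHalfPlane.I
        rw [smul_smul]; simp)

/-- The quotient distance on `Y = Γ\ℍ` induced by the hyperbolic distance on `ℍ`. -/
def dY (y y' : Y Γ) : ℝ :=
  sInf {d : ℝ | ∃ z z' : ℍ, Ymk Γ z = y ∧ Ymk Γ z' = y' ∧ d = dist z z'}

/-- First entry time into the projection of the section to `Y`. -/
def ξπ (x₀ : X Γ) (R : ℝ) : ℝ :=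
  sInf {s : ℝ | 0 < s ∧ πY Γ (hP Γ s x₀) ∈ πY Γ '' Hsec Γ R}

/-- `P_Γ = (0,1)·Γ ⊆ ℝ²`. -/
def PΓ : Set (ℝ × ℝ) :=
  (fun γ : G => ((γ : Matrix (Fin 2) (Fin 2) ℝ) 1 0, (γ : Matrix (Fin 2) (Fin 2) ℝ) 1 1)) '' Γ

/-- Right action of a matrix on a row vector `(p₁,p₂)·g`. -/
def rv (p : ℝ × ℝ) (g : G) : ℝ × ℝ :=
  (p.1 * (g : Matrix (Fin 2) (Fin 2) ℝ) 0 0 + p.2 * (g : Matrix (Fin 2) (Fin 2) ℝ) 1 0,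
   p.1 * (g : Matrix (Fin 2) (Fin 2) ℝ) 0 1 + p.2 * (g : Matrix (Fin 2) (Fin 2) ℝ) 1 1)

/-- `P_Γ·g`. -/
def PΓg (g : G) : Set (ℝ × ℝ) := (fun p => rv p g) '' PΓ Γ

/-- `A(B) = {n(s)a(t)u(r) : (r,(s,t)) ∈ B}`. -/
def AB (B : Set (ℝ × (ℝ × ℝ))) : Set G :=
  (fun q : ℝ × (ℝ × ℝ) => nM q.2.1 * aM q.2.2 * uM q.1) '' B

/-- The triangle `Δ_X` for `X > 0`, and `Δ_{-X}` for `X < 0`. -/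
def Δ (X : ℝ) : Set (ℝ × ℝ) :=
  if 0 < X then {p : ℝ × ℝ | 0 < p.1 ∧ p.1 ≤ X * p.2 ∧ 0 < p.2 ∧ p.2 ≤ 1}
  else {p : ℝ × ℝ | X * p.2 ≤ p.1 ∧ p.1 < 0 ∧ 0 < p.2 ∧ p.2 ≤ 1}

/-- hyperbolic area `∫_S (Im z)⁻² dLeb` of a subset of `ℍ`, viewed inside `ℂ`. -/
def volH (S : Set ℍ) : ℝ≥0∞ :=
  ∫⁻ z in ((↑) '' S : Set ℂ), ENNReal.ofReal ((z.im ^ 2)⁻¹)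


/- ===== auxiliary lemmas ===== -/

section Aux

lemma nM_mul (s s' : ℝ) : nM s * nM s' = nM (s + s') := by
  ext i j
  simp only [Matrix.SpecialLinearGroup.coe_mul]
  fin_cases i <;> fin_cases j <;> simp [nM, Matrix.mul_fin_two, add_comm]

lemma aM_mul (t t' : ℝ) : aM t * aM t' = aM (t + t') := by
  ext i j
  simp only [Matrix.SpecialLinearGroup.coe_mul]
  fin_cases i <;> fin_cases j <;>
    simp [aM, Matrix.mul_fin_two, ← Real.exp_add] <;> ring_nf

lemma nM_zero : nM 0 = 1 := by
  ext i j; fin_cases i <;> fin_cases j <;> simp [nM]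

lemma aM_zero : aM 0 = 1 := by
  ext i j; fin_cases i <;> fin_cases j <;> simp [aM]

lemma nM_inv (s : ℝ) : (nM s)⁻¹ = nM (-s) := by
  rw [inv_eq_iff_mul_eq_one, nM_mul]; simp [nM_zero]

lemma aM_inv (t : ℝ) : (aM t)⁻¹ = aM (-t) := by
  rw [inv_eq_iff_mul_eq_one, aM_mul]; simp [aM_zero]

lemma uM_inv (r : ℝ) : (uM r)⁻¹ = uM (-r) := by
  rw [inv_eq_iff_mul_eq_one]
  ext i j
  simp only [Matrix.SpecialLinearGroup.coe_mul]
  fin_cases i <;> fin_cases j <;> simp [uM, Matrix.mul_fin_two]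

lemma na_coe (s τ : ℝ) : ((nM s * aM τ : G) : Matrix (Fin 2) (Fin 2) ℝ)
    = !![Real.exp (τ/2), s * Real.exp (-(τ/2)); 0, Real.exp (-(τ/2))] := by
  simp only [Matrix.SpecialLinearGroup.coe_mul]
  simp [nM, aM, Matrix.mul_fin_two]

lemma an_swap (τ s : ℝ) : aM τ * nM s = nM (Real.exp τ * s) * aM τ := by
  have key : Real.exp τ * Real.exp (-(τ/2)) = Real.exp (τ/2) := by
    rw [← Real.exp_add]; ring_nf
  ext i j
  simp only [Matrix.SpecialLinearGroup.coe_mul]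
  fin_cases i <;> fin_cases j <;> simp [nM, aM, Matrix.mul_fin_two]
  calc Real.exp (τ/2) * s = Real.exp τ * Real.exp (-(τ/2)) * s := by rw [key]
    _ = Real.exp τ * s * Real.exp (-(τ/2)) := by ring

lemma decomp (g : G) (τ : ℝ) (h0 : (g : Matrix (Fin 2) (Fin 2) ℝ) 1 0 = 0)
    (h1 : (g : Matrix (Fin 2) (Fin 2) ℝ) 1 1 = Real.exp (-(τ/2))) :
    g = nM ((g : Matrix (Fin 2) (Fin 2) ℝ) 0 1 * Real.exp (τ/2)) * aM τ := by
  have hdet := g.prop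
  rw [Matrix.det_fin_two, h0, h1] at hdet
  rw [mul_zero, sub_zero] at hdet
  have h00 : (g : Matrix (Fin 2) (Fin 2) ℝ) 0 0 = Real.exp (τ/2) := by
    have h2 : Real.exp (-(τ/2)) * Real.exp (τ/2) = 1 := by
      rw [← Real.exp_add]; norm_num
    calc (g : Matrix (Fin 2) (Fin 2) ℝ) 0 0
        = (g : Matrix (Fin 2) (Fin 2) ℝ) 0 0 * (Real.exp (-(τ/2)) * Real.exp (τ/2)) := by
          rw [h2, mul_one]
      _ = Real.exp (τ/2) := by rw [← mul_assoc, hdet, one_mul]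
  ext i j
  rw [na_coe]
  fin_cases i <;> fin_cases j <;>
    simp [h00, h0, h1, mul_assoc, ← Real.exp_add]

lemma Xmk_eq {Γ : Subgroup G} {a b : G} : Xmk Γ a = Xmk Γ b ↔ b * a⁻¹ ∈ Γ := by
  unfold Xmk
  rw [Quotient.eq'']
  exact QuotientGroup.rightRel_apply

lemma Xmk_left {Γ : Subgroup G} {δ : G} (hδ : δ ∈ Γ) (g : G) :
    Xmk Γ (δ * g) = Xmk Γ g := by
  rw [Xmk_eq]
  simpa using Γ.inv_mem hδ

lemma hP_mk {Γ : Subgroup G} (r : ℝ) (g : G) :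
    hP Γ r (Xmk Γ g) = Xmk Γ (g * uM (-r)) := rfl

lemma ι_def {Γ : Subgroup G} (R : ℝ) (w : ℝ × ℝ) :
    ι Γ R w = Xmk Γ (nM w.1 * aM (w.2 + R)) := rfl

lemma mem_Γ_nM {Γ : Subgroup G} (hcusp : CuspAtInfinity Γ) (m : ℤ) : nM (m : ℝ) ∈ Γ := by
  have h : nM (m : ℝ) ∈ {γ : G | ∃ m' : ℤ, γ = nM m' ∨ γ = -nM m'} := ⟨m, Or.inl rfl⟩
  rw [← hcusp.2] at h
  exact h.1

lemma upper_classify {Γ : Subgroup G} (hcusp : CuspAtInfinity Γ) {γ : G} (hγ : γ ∈ Γ)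
    (h0 : (γ : Matrix (Fin 2) (Fin 2) ℝ) 1 0 = 0) :
    ∃ m : ℤ, γ = nM m ∨ γ = -nM m := by
  have h : γ ∈ {γ : G | γ ∈ Γ ∧ (γ : Matrix (Fin 2) (Fin 2) ℝ) 1 0 = 0} := ⟨hγ, h0⟩
  rw [hcusp.2] at h
  exact h

lemma entry_of_eq {g h : G} (e : g = h) (i j : Fin 2) :
    (g : Matrix (Fin 2) (Fin 2) ℝ) i j = (h : Matrix (Fin 2) (Fin 2) ℝ) i j := by rw [e]

lemma ι_injOn {Γ : Subgroup G} (hcusp : CuspAtInfinity Γ) (R : ℝ) :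
    Set.InjOn (ι Γ R) Sig := by
  rintro ⟨s, t⟩ hw ⟨s', t'⟩ hw' h
  obtain ⟨⟨hs0, hs1⟩, ht0⟩ := hw
  obtain ⟨⟨hs0', hs1'⟩, ht0'⟩ := hw'
  rw [ι_def, ι_def, Xmk_eq] at h
  set γ : G := nM s' * aM (t' + R) * (nM s * aM (t + R))⁻¹ with hγdef
  have hγeq : γ = nM (s' - s * Real.exp (t' - t)) * aM (t' - t) := by
    rw [hγdef, _root_.mul_inv_rev, nM_inv, aM_inv]
    calc nM s' * aM (t' + R) * (aM (-(t + R)) * nM (-s))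
        = nM s' * ((aM (t' + R) * aM (-(t + R))) * nM (-s)) := by
          simp only [mul_assoc]
      _ = nM s' * (aM (t' - t) * nM (-s)) := by rw [aM_mul]; ring_nf
      _ = nM s' * (nM (Real.exp (t' - t) * (-s)) * aM (t' - t)) := by rw [an_swap]
      _ = (nM s' * nM (Real.exp (t' - t) * (-s))) * aM (t' - t) := by
          simp only [mul_assoc]
      _ = nM (s' - s * Real.exp (t' - t)) * aM (t' - t) := by rw [nM_mul]; ring_nf
  have h10 : (γ : Matrix (Fin 2) (Fin 2) ℝ) 1 0 = 0 := by
    rw [hγeq, na_coe]; simp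
  obtain ⟨m, hm | hm⟩ := upper_classify hcusp h h10
  · -- γ = nM m
    have e : nM (s' - s * Real.exp (t' - t)) * aM (t' - t) = nM (m : ℝ) :=
      hγeq.symm.trans hm
    have h11 : Real.exp (-((t' - t)/2)) = 1 := by
      have := entry_of_eq e 1 1
      rw [na_coe] at this
      simpa [nM] using this
    have htt : t' = t := by
      have h0 := Real.exp_injective (h11.trans Real.exp_zero.symm)
      linarith
    have h01 : (s' - s * Real.exp (t' - t)) * Real.exp (-((t' - t)/2)) = m := by
      have := entry_of_eq e 0 1
      rw [na_coe] at this
      simpa [nM] using this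
    rw [htt] at h01
    simp at h01
    have hm0 : m = 0 := by
      have h1 : (m : ℝ) < 1 := by rw [← h01]; linarith
      have h2 : (-1 : ℝ) < m := by rw [← h01]; linarith
      have h1' : m < 1 := by exact_mod_cast h1
      have h2' : -1 < m := by exact_mod_cast h2
      omega
    rw [hm0] at h01
    simp at h01
    have : s' = s := by linarith
    simp [this, htt]
  · -- γ = -nM m : impossible
    exfalso
    have e : nM (s' - s * Real.exp (t' - t)) * aM (t' - t) = -nM (m : ℝ) :=
      hγeq.symm.trans hm
    have h11 : Real.exp (-((t' - t)/2)) = -1 := by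
      have := entry_of_eq e 1 1
      rw [na_coe, Matrix.SpecialLinearGroup.coe_neg] at this
      simpa [nM] using this
    nlinarith [Real.exp_pos (-((t' - t)/2))]

lemma rv_row (γ h : G) :
    rv ((γ : Matrix (Fin 2) (Fin 2) ℝ) 1 0, (γ : Matrix (Fin 2) (Fin 2) ℝ) 1 1) h
      = (((γ * h : G) : Matrix (Fin 2) (Fin 2) ℝ) 1 0,
         ((γ * h : G) : Matrix (Fin 2) (Fin 2) ℝ) 1 1) := by
  simp [rv, Matrix.mul_apply, Fin.sum_univ_two]

lemma naur_row (s τ ρ R : ℝ) :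
    ((nM s * aM τ * uM ρ * aM (-R) : G) : Matrix (Fin 2) (Fin 2) ℝ) 1 0
        = Real.exp (-((τ - R)/2) - R) * ρ ∧
    ((nM s * aM τ * uM ρ * aM (-R) : G) : Matrix (Fin 2) (Fin 2) ℝ) 1 1
        = Real.exp (-((τ - R)/2)) := by
  simp only [Matrix.SpecialLinearGroup.coe_mul]
  constructor
  · simp [nM, aM, uM, Matrix.mul_fin_two, Matrix.mul_apply, Fin.sum_univ_two,
      ← Real.exp_add]
    rw [show (-((τ - R)/2) - R) = (-(τ/2)) + (-R/2) by ring, Real.exp_add]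
    ring
  · simp [nM, aM, uM, Matrix.mul_fin_two, Matrix.mul_apply, Fin.sum_univ_two,
      ← Real.exp_add]
    ring_nf

lemma mul_aM_row (g : G) (t : ℝ) :
    ((g * aM t : G) : Matrix (Fin 2) (Fin 2) ℝ) 1 0
        = (g : Matrix (Fin 2) (Fin 2) ℝ) 1 0 * Real.exp (t/2) ∧
    ((g * aM t : G) : Matrix (Fin 2) (Fin 2) ℝ) 1 1
        = (g : Matrix (Fin 2) (Fin 2) ℝ) 1 1 * Real.exp (-(t/2)) := by
  simp only [Matrix.SpecialLinearGroup.coe_mul]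
  constructor <;> simp [aM, Matrix.mul_apply, Fin.sum_univ_two]

lemma mul_uM_row (g : G) (r : ℝ) :
    ((g * uM r : G) : Matrix (Fin 2) (Fin 2) ℝ) 1 0
        = (g : Matrix (Fin 2) (Fin 2) ℝ) 1 0 + (g : Matrix (Fin 2) (Fin 2) ℝ) 1 1 * r ∧
    ((g * uM r : G) : Matrix (Fin 2) (Fin 2) ℝ) 1 1
        = (g : Matrix (Fin 2) (Fin 2) ℝ) 1 1 := by
  simp only [Matrix.SpecialLinearGroup.coe_mul]
  constructor <;> simp [uM, Matrix.mul_apply, Fin.sum_univ_two]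

lemma mul_uM_01 (g : G) (r : ℝ) :
    ((g * uM r : G) : Matrix (Fin 2) (Fin 2) ℝ) 0 1
        = (g : Matrix (Fin 2) (Fin 2) ℝ) 0 1 := by
  simp only [Matrix.SpecialLinearGroup.coe_mul]
  simp [uM, Matrix.mul_apply, Fin.sum_univ_two]

end Aux

/-- Proposition 4.3: counting hits with given time and height via the planar point set `P_Γ g`. -/
theorem statement8 (Γ : Subgroup G) [DiscreteTopology ↥Γ] (hcusp : CuspAtInfinity Γ)
    (μt : Measure G) [μt.IsHaarMeasure]
    (F : Set G) (hF : IsFundamentalDomain ↥Γ F μt) (hFfin : μt F ≠ ⊤)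
    (hd : HittingData Γ)
    (R : ℝ) (B : Set (ℝ × ℝ)) (hB : B ⊆ Set.Ioi (0:ℝ) ×ˢ Set.Ici (0:ℝ))
    (g₀ : G) (x₀ : X Γ) (hx₀ : x₀ = Xmk Γ g₀) :
    {j : ℕ | (Real.exp (-R) * hd.ξ x₀ R j, (hd.w x₀ R j).2) ∈ B}.ncard
      = (PΓg Γ (g₀ * aM (-R)) ∩
          (fun q : ℝ × ℝ => (Real.exp (-q.2 / 2) * q.1, Real.exp (-q.2 / 2))) '' B).ncard := by
  classical
  subst hx₀
  set F : ℝ × ℝ → ℝ × ℝ :=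
    fun q : ℝ × ℝ => (Real.exp (-q.2 / 2) * q.1, Real.exp (-q.2 / 2)) with hF
  set c : ℕ → ℝ × ℝ := fun j => (Real.exp (-R) * hd.ξ (Xmk Γ g₀) R j, (hd.w (Xmk Γ g₀) R j).2) with hc
  -- injectivity of F ∘ c
  have hinj : Function.Injective (fun j => F (c j)) := by
    intro j k h
    simp only [hF, hc] at h
    have h2 : Real.exp (-(hd.w (Xmk Γ g₀) R j).2 / 2) = Real.exp (-(hd.w (Xmk Γ g₀) R k).2 / 2) :=
      congrArg Prod.snd h
    have h1 : Real.exp (-(hd.w (Xmk Γ g₀) R j).2 / 2) * (Real.exp (-R) * hd.ξ (Xmk Γ g₀) R j)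
        = Real.exp (-(hd.w (Xmk Γ g₀) R k).2 / 2) * (Real.exp (-R) * hd.ξ (Xmk Γ g₀) R k) :=
      congrArg Prod.fst h
    rw [← h2] at h1
    have h3 := mul_left_cancel₀ (Real.exp_ne_zero _) h1
    have h4 := mul_left_cancel₀ (Real.exp_ne_zero (-R)) h3
    exact (hd.ξ_mono (Xmk Γ g₀) R).injective h4
  have himg : (fun j => F (c j)) '' {j : ℕ | c j ∈ B}
      = PΓg Γ (g₀ * aM (-R)) ∩ F '' B := by
    ext p
    constructor
    · rintro ⟨j, hj, rfl⟩
      refine ⟨?_, ⟨c j, hj, rfl⟩⟩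
      obtain ⟨⟨hs0, hs1⟩, ht0⟩ := hd.w_mem (Xmk Γ g₀) R j
      have hspec := hd.w_spec (Xmk Γ g₀) R j
      rw [hP_mk, ι_def, Xmk_eq] at hspec
      set γ : G := g₀ * uM (-(hd.ξ (Xmk Γ g₀) R j)) *
        (nM (hd.w (Xmk Γ g₀) R j).1 * aM ((hd.w (Xmk Γ g₀) R j).2 + R))⁻¹ with hγ
      have hγinv : γ⁻¹ ∈ Γ := Γ.inv_mem hspec
      have hu : uM (hd.ξ (Xmk Γ g₀) R j) = (uM (-(hd.ξ (Xmk Γ g₀) R j)))⁻¹ := by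
        rw [uM_inv, neg_neg]
      have hrow : γ⁻¹ * (g₀ * aM (-R))
          = nM (hd.w (Xmk Γ g₀) R j).1 * aM ((hd.w (Xmk Γ g₀) R j).2 + R) * uM (hd.ξ (Xmk Γ g₀) R j) * aM (-R) := by
        rw [hγ, hu]
        group
      refine ⟨_, ⟨γ⁻¹, hγinv, rfl⟩, ?_⟩
      beta_reduce
      rw [rv_row, hrow]
      have hn := naur_row (hd.w (Xmk Γ g₀) R j).1 ((hd.w (Xmk Γ g₀) R j).2 + R) (hd.ξ (Xmk Γ g₀) R j) R
      simp only [hF, hc]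
      refine Prod.ext ?_ ?_
      · rw [hn.1,
          show -(((hd.w (Xmk Γ g₀) R j).2 + R - R)/2) - R = (-(hd.w (Xmk Γ g₀) R j).2 / 2) + (-R) by ring,
          Real.exp_add]
        ring
      · rw [hn.2,
          show -(((hd.w (Xmk Γ g₀) R j).2 + R - R)/2) = -(hd.w (Xmk Γ g₀) R j).2 / 2 by ring]
    · rintro ⟨⟨_, ⟨γ, hγΓ, rfl⟩, hp⟩, ⟨r', t⟩, hqB, hq⟩
      have hr' : 0 < r' := (hB hqB).1
      have ht : 0 ≤ t := (hB hqB).2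
      beta_reduce at hp
      rw [rv_row] at hp
      set D : G := γ * g₀ with hD
      have hassoc : γ * (g₀ * aM (-R)) = D * aM (-R) := (mul_assoc _ _ _).symm
      rw [hassoc] at hp
      have hpq := hp.trans hq.symm
      simp only [hF] at hpq
      have e1 : (D : Matrix (Fin 2) (Fin 2) ℝ) 1 0 * Real.exp ((-R)/2)
          = Real.exp (-t / 2) * r' := by
        rw [← (mul_aM_row D (-R)).1]
        exact congrArg Prod.fst hpq
      have e2 : (D : Matrix (Fin 2) (Fin 2) ℝ) 1 1 * Real.exp (-((-R)/2))
          = Real.exp (-t / 2) := by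
        rw [← (mul_aM_row D (-R)).2]
        exact congrArg Prod.snd hpq
      have hd11 : (D : Matrix (Fin 2) (Fin 2) ℝ) 1 1 = Real.exp (-((t + R)/2)) := by
        refine mul_right_cancel₀ (Real.exp_ne_zero (-((-R)/2))) (e2.trans ?_)
        rw [← Real.exp_add]
        ring_nf
      have hd10 : (D : Matrix (Fin 2) (Fin 2) ℝ) 1 0
          = Real.exp (-t / 2) * r' * Real.exp (R/2) := by
        refine mul_right_cancel₀ (Real.exp_ne_zero ((-R)/2)) (e1.trans ?_)
        rw [mul_assoc, ← Real.exp_add,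
          show R/2 + (-R)/2 = 0 by ring, Real.exp_zero, mul_one]
      set ξ : ℝ := Real.exp R * r' with hξ
      have hξpos : 0 < ξ := mul_pos (Real.exp_pos R) hr'
      set g : G := D * uM (-ξ) with hg
      have hg10 : (g : Matrix (Fin 2) (Fin 2) ℝ) 1 0 = 0 := by
        rw [hg, (mul_uM_row D (-ξ)).1, hd10, hd11, hξ]
        have hx : Real.exp (-t / 2) * Real.exp (R/2)
            = Real.exp (-((t + R)/2)) * Real.exp R := by
          rw [← Real.exp_add, ← Real.exp_add]
          ring_nf
        linear_combination r' * hx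
      have hg11 : (g : Matrix (Fin 2) (Fin 2) ℝ) 1 1 = Real.exp (-((t + R)/2)) := by
        rw [hg, (mul_uM_row D (-ξ)).2, hd11]
      have hdec := decomp g (t + R) hg10 hg11
      set s₀ : ℝ := (g : Matrix (Fin 2) (Fin 2) ℝ) 0 1 * Real.exp ((t + R)/2) with hs₀
      have hkey : nM (-(⌊s₀⌋ : ℝ)) * g = nM (Int.fract s₀) * aM (t + R) := by
        rw [hdec, ← mul_assoc, nM_mul]
        congr 2
        rw [← Int.self_sub_floor]
        ring
      have hmem : nM (-(⌊s₀⌋ : ℝ)) * γ ∈ Γ := by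
        have h := mem_Γ_nM hcusp (-⌊s₀⌋)
        push_cast at h
        exact Γ.mul_mem h hγΓ
      have hiota : ι Γ R (Int.fract s₀, t) = hP Γ ξ (Xmk Γ g₀) := by
        rw [hP_mk, ι_def, ← hkey]
        have : nM (-(⌊s₀⌋ : ℝ)) * g = (nM (-(⌊s₀⌋ : ℝ)) * γ) * (g₀ * uM (-ξ)) := by
          rw [hg, hD]
          group
        rw [this, Xmk_left hmem]
      have hSig : (Int.fract s₀, t) ∈ Sig :=
        ⟨⟨Int.fract_nonneg _, Int.fract_lt_one _⟩, ht⟩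
      have hHsec : hP Γ ξ (Xmk Γ g₀) ∈ Hsec Γ R := ⟨(Int.fract s₀, t), hSig, hiota⟩
      obtain ⟨j, hj⟩ := hd.ξ_complete (Xmk Γ g₀) R ξ hξpos hHsec
      have hwj : hd.w (Xmk Γ g₀) R j = (Int.fract s₀, t) := by
        apply ι_injOn hcusp R (hd.w_mem (Xmk Γ g₀) R j) hSig
        rw [hd.w_spec (Xmk Γ g₀) R j, hj, hiota]
      have hcj : c j = (r', t) := by
        rw [hc]
        simp only
        rw [hj, hwj, hξ, ← mul_assoc, ← Real.exp_add]
        simp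
      exact ⟨j, by rw [Set.mem_setOf_eq, hcj]; exact hqB, by show F (c j) = p; rw [hcj]; exact hq⟩
  calc {j : ℕ | c j ∈ B}.ncard
      = ((fun j => F (c j)) '' {j : ℕ | c j ∈ B}).ncard :=
        (Set.ncard_image_of_injOn hinj.injOn).symm
    _ = _ := by rw [himg]

end CuspEVT
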